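/- Let G be a finite group, p a prime, and N a normal subgroup of G with N ≤ Z*(G). Then O_p(G/N) equals the image of O_p(G) under the quotient map G → G/N (that is, O_p(G/N) = O_p(G)N/N). -/

import Mathlib

/-- The hypercenter `Z*(G)` of a group: the union (supremum) of the upper central series. -/
def hypercenter (G : Type*) [Group G] : Subgroup G :=
  ⨆ n : ℕ, upperCentralSeries G n

/-- The `p`-core `O_p(G)`: the largest normal `p`-subgroup of `G`, i.e. the supremum of all
normal `p`-subgroups. -/
def pCore (p : ℕ) (G : Type*) [Group G] : Subgroup G :=
  ⨆ (H : Subgroup G) (_ : H.Normal ∧ IsPGroup p H), H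

/-!
Let `K` be the preimage of `O_p(G/N)`. Since `K/N` is a `p`-group and `N` lies in a term `Z_n(K)`
of the upper central series of `K`, the lower central series of `K` descends into `N` and then
to `1`, so `K` is nilpotent. Its Sylow `p`-subgroup `P` is then characteristic in `K`, hence
normal in `G`, so `P ≤ O_p(G)`; and `K = PN`, because the index of `PN` in `K` is both a power of
`p` and prime to `p`.
-/

namespace Subgroup

variable {G : Type*} [Group G]

theorem lowerCentralSeries_succ_le_of_le_upperCentralSeries_succ {m k : ℕ}
    (h : (⊤ : Subgroup G).lowerCentralSeries m ≤ upperCentralSeries G (k + 1)) :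
    (⊤ : Subgroup G).lowerCentralSeries (m + 1) ≤ upperCentralSeries G k := by
  rw [lowerCentralSeries_succ]
  exact (commutator_mono h le_rfl).trans (commutator_upperCentralSeries_top_le G k)

theorem lowerCentralSeries_add_eq_bot_of_le_upperCentralSeries {m k : ℕ}
    (h : (⊤ : Subgroup G).lowerCentralSeries m ≤ upperCentralSeries G k) :
    (⊤ : Subgroup G).lowerCentralSeries (m + k) = ⊥ := by
  induction k generalizing m with
  | zero => exact le_bot_iff.mp h
  | succ k ih =>
    rw [← add_assoc, add_right_comm]
    exact ih (lowerCentralSeries_succ_le_of_le_upperCentralSeries_succ h)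

theorem isNilpotent_of_quotient_of_le_upperCentralSeries (N : Subgroup G) [N.Normal] {n : ℕ}
    (hN : N ≤ upperCentralSeries G n) [Group.IsNilpotent (G ⧸ N)] : Group.IsNilpotent G := by
  obtain ⟨c, hc⟩ := nilpotent_iff_lowerCentralSeries.mp ‹Group.IsNilpotent (G ⧸ N)›
  have hcN : (⊤ : Subgroup G).lowerCentralSeries c ≤ N := by
    rw [← QuotientGroup.ker_mk' N, ← map_eq_bot_iff, map_lowerCentralSeries,
      map_top_of_surjective _ (QuotientGroup.mk'_surjective N), hc]
  exact nilpotent_iff_lowerCentralSeries.mpr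
    ⟨_, lowerCentralSeries_add_eq_bot_of_le_upperCentralSeries (hcN.trans hN)⟩

theorem upperCentralSeries_subgroupOf_le (H : Subgroup G) (n : ℕ) :
    (upperCentralSeries G n).subgroupOf H ≤ upperCentralSeries H n :=
  ascending_central_series_le_upper (fun n => (upperCentralSeries G n).subgroupOf H)
    ⟨bot_subgroupOf _, fun _ _ hx g =>
      mem_subgroupOf.mpr (mem_upperCentralSeries_succ_iff.mp hx g)⟩ n

theorem exists_hypercenter_eq_upperCentralSeries [Finite G] :
    ∃ n, hypercenter G = upperCentralSeries G n := by
  obtain ⟨n, hn⟩ := WellFoundedGT.monotone_chain_condition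
    ⟨upperCentralSeries G, upperCentralSeries_mono G⟩
  refine ⟨n, le_antisymm (iSup_le fun m => ?_) (le_iSup (upperCentralSeries G) n)⟩
  rcases le_total m n with hmn | hnm
  · exact upperCentralSeries_mono G hmn
  · exact (hn m hnm).ge

end Subgroup

section PCore

variable {p : ℕ} {G : Type*} [Group G]

theorem le_pCore {H : Subgroup G} (hH : H.Normal) (hpH : IsPGroup p H) : H ≤ pCore p G :=
  le_iSup₂_of_le H ⟨hH, hpH⟩ le_rfl

theorem supClosed_setOf_normal_isPGroup :
    SupClosed {H : Subgroup G | H.Normal ∧ IsPGroup p H} := by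
  rintro H ⟨hH, hpH⟩ K ⟨hK, hpK⟩
  exact ⟨Subgroup.sup_normal H K, hpH.to_sup_of_normal_right hpK⟩

variable [Finite G]

theorem pCore_normal_and_isPGroup : (pCore p G).Normal ∧ IsPGroup p (pCore p G) := by
  have hbot : (⊥ : Subgroup G) ∈ {H : Subgroup G | H.Normal ∧ IsPGroup p H} :=
    ⟨inferInstance, IsPGroup.of_bot⟩
  exact supClosed_setOf_normal_isPGroup.iSup_mem hbot fun H =>
    supClosed_setOf_normal_isPGroup.iSup_mem hbot id

instance pCore_normal : (pCore p G).Normal := pCore_normal_and_isPGroup.1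

theorem isPGroup_pCore : IsPGroup p (pCore p G) := pCore_normal_and_isPGroup.2

end PCore

section Sylow

variable {p : ℕ} {G : Type*} [Group G]

theorem isPGroup_quotient_subgroupOf_comap (N : Subgroup G) [N.Normal] {H : Subgroup (G ⧸ N)}
    (hH : IsPGroup p H) :
    IsPGroup p
      (H.comap (QuotientGroup.mk' N) ⧸ N.subgroupOf (H.comap (QuotientGroup.mk' N))) := by
  intro q
  obtain ⟨k, rfl⟩ := QuotientGroup.mk_surjective q
  obtain ⟨m, hm⟩ := hH ⟨_, k.2⟩
  refine ⟨m, ?_⟩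
  rw [← QuotientGroup.mk_pow, QuotientGroup.eq_one_iff, Subgroup.mem_subgroupOf,
    ← QuotientGroup.eq_one_iff]
  simpa using congrArg Subtype.val hm

variable [Finite G] [Fact p.Prime]

theorem Sylow.sup_eq_top_of_isPGroup_quotient (P : Sylow p G) {N : Subgroup G} [N.Normal]
    (hN : IsPGroup p (G ⧸ N)) : (P : Subgroup G) ⊔ N = ⊤ := by
  obtain ⟨m, hm⟩ := hN.exists_card_eq
  have hdvd : ((P : Subgroup G) ⊔ N).index ∣ p ^ m :=
    hm ▸ Subgroup.index_dvd_of_le le_sup_right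
  have hcop : Nat.Coprime ((P : Subgroup G) ⊔ N).index (p ^ m) :=
    Nat.Coprime.pow_right m <| Nat.Coprime.symm <| (Nat.Prime.coprime_iff_not_dvd Fact.out).mpr
      fun h => P.not_dvd_index (h.trans (Subgroup.index_dvd_of_le le_sup_left))
  exact Subgroup.index_eq_one.mp (hcop.eq_one_of_dvd hdvd)

theorem le_pCore_sup_of_le_hypercenter {N K : Subgroup G} [N.Normal] [K.Normal] (hNK : N ≤ K)
    (hN : N ≤ hypercenter G) (hK : IsPGroup p (K ⧸ N.subgroupOf K)) :
    K ≤ pCore p G ⊔ N := by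
  obtain ⟨n, hn⟩ := Subgroup.exists_hypercenter_eq_upperCentralSeries (G := G)
  have : Group.IsNilpotent (K ⧸ N.subgroupOf K) := hK.isNilpotent
  have hNZ : N.subgroupOf K ≤ Subgroup.upperCentralSeries K n :=
    (Subgroup.subgroupOf_mono K (hn ▸ hN)).trans (Subgroup.upperCentralSeries_subgroupOf_le K n)
  have : Group.IsNilpotent K :=
    Subgroup.isNilpotent_of_quotient_of_le_upperCentralSeries (N.subgroupOf K) hNZ
  obtain ⟨P⟩ : Nonempty (Sylow p K) := inferInstance
  have : (P : Subgroup K).Characteristic := P.characteristic_of_normal inferInstance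
  have hPG : (P : Subgroup K).map K.subtype ≤ pCore p G := le_pCore inferInstance (P.2.map _)
  calc K = (⊤ : Subgroup K).map K.subtype := by
        rw [← MonoidHom.range_eq_map, Subgroup.range_subtype]
    _ = ((P : Subgroup K) ⊔ N.subgroupOf K).map K.subtype := by
      rw [P.sup_eq_top_of_isPGroup_quotient hK]
    _ = (P : Subgroup K).map K.subtype ⊔ N := by
      rw [Subgroup.map_sup, Subgroup.subgroupOf_map_subtype, inf_of_le_left hNK]
    _ ≤ pCore p G ⊔ N := sup_le_sup_right hPG N

end Sylow

/-- Let `G` be a finite group, `p` a prime, and `N` a normal subgroup of `G`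
with `N ≤ Z*(G)`. Then `O_p(G/N) = O_p(G)N/N`, i.e. `O_p(G/N)` is the image of `O_p(G)` under
the quotient map. -/
theorem pCore_quotient_of_le_hypercenter
    {G : Type*} [Group G] [Finite G] (p : ℕ) (hp : p.Prime)
    (N : Subgroup G) [N.Normal] (hN : N ≤ hypercenter G) :
    pCore p (G ⧸ N) = (pCore p G).map (QuotientGroup.mk' N) := by
  have := Fact.mk hp
  set K := (pCore p (G ⧸ N)).comap (QuotientGroup.mk' N)
  have hNK : N ≤ K := (QuotientGroup.ker_mk' N).ge.trans (MonoidHom.ker_le_comap _ _)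
  have hK : K ≤ pCore p G ⊔ N := le_pCore_sup_of_le_hypercenter hNK hN
    (isPGroup_quotient_subgroupOf_comap N isPGroup_pCore)
  refine le_antisymm ?_ (le_pCore inferInstance (isPGroup_pCore.map _))
  calc pCore p (G ⧸ N) = K.map (QuotientGroup.mk' N) :=
        (Subgroup.map_comap_eq_self_of_surjective (QuotientGroup.mk'_surjective N) _).symm
    _ ≤ (pCore p G ⊔ N).map (QuotientGroup.mk' N) := Subgroup.map_mono hK
    _ = (pCore p G).map (QuotientGroup.mk' N) := by
      rw [Subgroup.map_sup, QuotientGroup.map_mk'_self, sup_bot_eq]
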